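/- arXiv:1009.2929 — 2 statements merged into one kernel-verified Lean document; each statement's English description precedes it below -/
import Mathlib

section
/- For every prime p and every integer n ≥ 0, the polynomial congruence B_{p+n}(x) ≡ x^p B_n(x) + B_{n+1}(x) (mod p) holds, i.e., all coefficients of B_{p+n}(x) − x^p B_n(x) − B_{n+1}(x) are divisible by p. -/
open Polynomial Finset

/-- Stirling numbers of the second kind. -/
def stirling2 : ℕ → ℕ → ℕ
  | 0, 0 => 1
  | 0, _ + 1 => 0
  | _ + 1, 0 => 0
  | n + 1, k + 1 => (k + 1) * stirling2 n (k + 1) + stirling2 n k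

/-- Signed Stirling numbers of the first kind. -/
def stirling1 : ℕ → ℕ → ℤ
  | 0, 0 => 1
  | 0, _ + 1 => 0
  | n + 1, 0 => -(n : ℤ) * stirling1 n 0
  | n + 1, k + 1 => stirling1 n k - (n : ℤ) * stirling1 n (k + 1)

/-- The Bell polynomial `B_m(x) = ∑_{j=0}^m S(m,j) x^j` over `ℤ`. -/
noncomputable def bellPoly (m : ℕ) : Polynomial ℤ :=
  ∑ j ∈ range (m + 1), (stirling2 m j : ℤ) • X ^ j

/-- The derangement polynomial `D_m(x) = ∑_{j=0}^m C(m,j) j! (x-1)^{m-j}` over `ℤ`. -/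
noncomputable def derPoly (m : ℕ) : Polynomial ℤ :=
  ∑ j ∈ range (m + 1), ((m.choose j * j.factorial : ℕ) : ℤ) • (X - 1) ^ (m - j)

/-- The Bell numbers `B_m = ∑_j S(m,j)`. -/
def bell (m : ℕ) : ℕ := ∑ j ∈ range (m + 1), stirling2 m j

/-!
Over a ring of characteristic `p` the recursion `B_{m+1} = x (B_m + B_m')` commutes with
multiplication by `x^p`, because `(x^p)' = p x^(p-1) = 0`. Hence both sides of
`B_{p+n} = x^p B_n + B_{n+1}` satisfy the same recursion in `n`, and it suffices to show
`B_p = x^p + x` mod `p`, i.e. `p ∣ S(p, k)` for `1 < k < p`. This follows from the explicit formula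
`k! S(m, k) = ∑_j (-1)^(k+j) C(k, j) j^m` and Fermat's little theorem `j^p ≡ j`, which give
`k! S(p, k) ≡ k! S(1, k) = 0` with `k!` a unit mod `p`.
-/

theorem stirling2_eq_stirlingSecond : ∀ m k, stirling2 m k = Nat.stirlingSecond m k
  | 0, 0 | 0, _ + 1 | _ + 1, 0 => rfl
  | m + 1, k + 1 => by
    rw [stirling2, Nat.stirlingSecond_succ_succ, stirling2_eq_stirlingSecond m (k + 1),
      stirling2_eq_stirlingSecond m k]

theorem coeff_bellPoly (m j : ℕ) : (bellPoly m).coeff j = Nat.stirlingSecond m j := by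
  simp only [bellPoly, finsetSum_coeff, coeff_smul, coeff_X_pow, smul_eq_mul, mul_ite, mul_one,
    mul_zero, sum_ite_eq, mem_range, stirling2_eq_stirlingSecond]
  split_ifs with hj
  · rfl
  · rw [Nat.stirlingSecond_eq_zero_of_lt (by omega), Nat.cast_zero]

theorem bellPoly_succ (m : ℕ) : bellPoly (m + 1) = X * (bellPoly m + derivative (bellPoly m)) := by
  ext (_ | j)
  · simp [coeff_bellPoly]
  · rw [coeff_X_mul, coeff_add, coeff_derivative, coeff_bellPoly, coeff_bellPoly, coeff_bellPoly,
      Nat.stirlingSecond_succ_succ]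
    push_cast
    ring

theorem natCast_mul_choose_succ (k j : ℕ) :
    (j : ℤ) * (k + 1).choose j = (k + 1) * ((k + 1).choose j - k.choose j) := by
  rcases le_or_gt j (k + 1) with hj | hj
  · have := Nat.choose_mul_succ_eq k j
    zify [hj] at this
    linear_combination this
  · simp [Nat.choose_eq_zero_of_lt hj, Nat.choose_eq_zero_of_lt (show k < j by omega)]

-- The sign is written `(-1) ^ (k + j)` rather than `(-1) ^ (k - j)` to avoid truncated subtraction.
theorem factorial_mul_stirlingSecond : ∀ m k : ℕ,
    (k.factorial : ℤ) * Nat.stirlingSecond m k =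
      ∑ j ∈ range (k + 1), (-1) ^ (k + j) * (k.choose j : ℤ) * (j : ℤ) ^ m
  | 0, k => by
    simp_rw [pow_zero, mul_one, pow_add, mul_assoc, ← mul_sum, Int.alternating_sum_range_choose]
    cases k <;> simp
  | m + 1, 0 => by simp
  | m + 1, k + 1 => by
    have hsum :
        ∑ j ∈ range (k + 2), (-1) ^ (k + 1 + j) * ((k + 1).choose j : ℤ) * (j : ℤ) ^ (m + 1) =
          (k + 1) * (∑ j ∈ range (k + 2), (-1) ^ (k + 1 + j) * ((k + 1).choose j : ℤ) * (j : ℤ) ^ m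
            + ∑ j ∈ range (k + 2), (-1) ^ (k + j) * (k.choose j : ℤ) * (j : ℤ) ^ m) := by
      rw [← sum_add_distrib, mul_sum]
      refine sum_congr rfl fun j _ => ?_
      linear_combination (-1) ^ (k + 1 + j) * (j : ℤ) ^ m * natCast_mul_choose_succ k j
    rw [hsum, ← factorial_mul_stirlingSecond m (k + 1), sum_range_succ _ (k + 1),
      Nat.choose_succ_self, ← factorial_mul_stirlingSecond m k, Nat.stirlingSecond_succ_succ,
      Nat.factorial_succ]
    push_cast
    ring

theorem Nat.Prime.dvd_stirlingSecond {p k : ℕ} (hp : p.Prime) (hk₁ : 1 < k) (hkp : k < p) :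
    p ∣ Nat.stirlingSecond p k := by
  have := Fact.mk hp
  have hfermat : (((k.factorial : ℤ) * Nat.stirlingSecond p k : ℤ) : ZMod p) =
      ((k.factorial : ℤ) * Nat.stirlingSecond 1 k : ℤ) := by
    simp_rw [factorial_mul_stirlingSecond, Int.cast_sum, Int.cast_mul, Int.cast_pow,
      Int.cast_natCast, ZMod.pow_card, pow_one]
  have hk : Nat.stirlingSecond 1 k = 0 := Nat.stirlingSecond_eq_zero_of_lt hk₁
  have hfac : (k.factorial : ZMod p) ≠ 0 := by
    rw [Ne, ZMod.natCast_eq_zero_iff, hp.dvd_factorial]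
    omega
  push_cast [hk] at hfermat
  rw [← ZMod.natCast_eq_zero_iff]
  exact mul_left_cancel₀ hfac hfermat

theorem bellPoly_zero : bellPoly 0 = 1 := by
  simp [bellPoly, stirling2]

variable {R : Type*} [CommRing R]

theorem map_bellPoly_succ (m : ℕ) :
    (bellPoly (m + 1)).map (Int.castRingHom R) =
      X * ((bellPoly m).map (Int.castRingHom R) +
        derivative ((bellPoly m).map (Int.castRingHom R))) := by
  rw [bellPoly_succ, Polynomial.map_mul, map_X, Polynomial.map_add, derivative_map]

theorem map_bellPoly_prime {p : ℕ} [CharP R p] (hp : p.Prime) :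
    (bellPoly p).map (Int.castRingHom R) = X ^ p + X := by
  ext i
  rw [coeff_map, coeff_bellPoly, coeff_add, coeff_X_pow, coeff_X, eq_intCast, Int.cast_natCast]
  rcases lt_trichotomy i 1 with hi | rfl | hi
  · obtain rfl : i = 0 := by omega
    obtain ⟨q, rfl⟩ := Nat.exists_eq_add_one_of_ne_zero hp.ne_zero
    simp
  · obtain ⟨q, rfl⟩ := Nat.exists_eq_add_one_of_ne_zero hp.ne_zero
    have hq : q ≠ 0 := by rintro rfl; exact Nat.not_prime_one hp
    simp [Nat.stirlingSecond_one_right, hq]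
  rcases lt_trichotomy i p with hip | rfl | hip
  · rw [(CharP.cast_eq_zero_iff R p _).mpr (hp.dvd_stirlingSecond hi hip)]
    simp [hip.ne, hi.ne]
  · simp [Nat.stirlingSecond_self, hi.ne]
  · simp [Nat.stirlingSecond_eq_zero_of_lt hip, hip.ne', hi.ne]

theorem map_bellPoly_add_prime {p : ℕ} [CharP R p] (hp : p.Prime) (n : ℕ) :
    (bellPoly (p + n)).map (Int.castRingHom R) =
      X ^ p * (bellPoly n).map (Int.castRingHom R) +
        (bellPoly (n + 1)).map (Int.castRingHom R) := by
  induction n with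
  | zero => simp [map_bellPoly_prime hp, map_bellPoly_succ, bellPoly_zero]
  | succ n ih =>
    have hXp : derivative (X ^ p : R[X]) = 0 := by
      rw [derivative_X_pow, CharP.cast_eq_zero, map_zero, zero_mul]
    rw [← add_assoc, map_bellPoly_succ, ih, map_bellPoly_succ (n + 1), map_bellPoly_succ n,
      derivative_add, derivative_mul, hXp]
    ring

theorem bellPoly_touchard (p : ℕ) (hp : p.Prime) (n : ℕ) :
    ∀ i, (p : ℤ) ∣ (bellPoly (p + n) - X ^ p * bellPoly n - bellPoly (n + 1)).coeff i := by
  intro i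
  rw [← ZMod.intCast_zmod_eq_zero_iff_dvd, ← eq_intCast (Int.castRingHom (ZMod p)), ← coeff_map,
    Polynomial.map_sub, Polynomial.map_sub, Polynomial.map_mul, Polynomial.map_pow, map_X,
    map_bellPoly_add_prime hp, add_sub_cancel_left, sub_self, coeff_zero]
end

section
/- For any integer m ≥ 1 and any prime p not dividing m, Σ_{k=1}^{p-1} (−m)^{p-1-k} B_{k+2} ≡ (−1)^m (D_m − D_{m+1}) (mod p). -/
open Polynomial Finset

/-!
Let `L : 𝔽_p[X] → 𝔽_p` be the umbral functional `X ^ n ↦ B_n`. The Bell recurrence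
`B_{n+1} = ∑ₖ C(n,k) B_k` says `L (X f) = L (f (X + 1))`, hence `L` sends every falling
factorial `X (X - 1) ⋯ (X - n + 1)` to `1`; for `n = p` that factorial is
`∏_{c ∈ 𝔽_p} (X - c) = X ^ p - X`. Writing `Q_b = ∏_{c ≠ b} (X - c)`, we have
`Q_b (X + 1) = Q_{b-1}` and `X Q_b = (X - b) Q_b + b Q_b`, so `L (Q_{b-1}) = 1 + b L (Q_b)`:
this is the derangement recurrence, and `L (Q_{-n-1}) = (-1)^n D_n`. Finally, for `a = -m ≠ 0`
Fermat gives `Q_a = ∑_{k=1}^{p-1} a^{p-1-k} X^k`, so the left side is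
`L (X² Q_a) = L (Q_{a-2}) + L (Q_{a-1})`.
-/

lemma stirling2_eq_zero_of_lt : ∀ {n k : ℕ}, n < k → stirling2 n k = 0
  | 0, _ + 1, _ => rfl
  | n + 1, k + 1, h => by
    rw [stirling2, stirling2_eq_zero_of_lt (by omega : n < k + 1),
      stirling2_eq_zero_of_lt (by omega : n < k), mul_zero]

lemma stirling2_succ_succ_eq_sum_choose_mul (n j : ℕ) :
    stirling2 (n + 1) (j + 1) = ∑ k ∈ range (n + 1), n.choose k * stirling2 k j := by
  induction n generalizing j with
  | zero => simp [stirling2]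
  | succ n ih =>
    have pascal := sum_choose_succ_mul (R := ℕ) (fun k _ => stirling2 k j) n
    simp only [Nat.cast_id] at pascal
    have shifted : ∑ k ∈ range (n + 1), n.choose k * stirling2 (k + 1) j
        = j * stirling2 (n + 1) (j + 1) + stirling2 (n + 1) j := by
      cases j with
      | zero => simp [stirling2]
      | succ i =>
        rw [ih, ih, mul_sum, ← sum_add_distrib]
        exact sum_congr rfl fun k _ => by rw [stirling2]; ring
    rw [pascal, ← ih, shifted, stirling2]
    ring

lemma bell_succ (n : ℕ) : bell (n + 1) = ∑ k ∈ range (n + 1), n.choose k * bell k := by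
  have bell_eq (k : ℕ) (hk : k ∈ range (n + 1)) :
      bell k = ∑ j ∈ range (n + 1), stirling2 k j :=
    sum_subset (range_subset_range.2 (by simp at hk; omega)) fun j hj hj' =>
      stirling2_eq_zero_of_lt (by simp at hj hj'; omega)
  rw [sum_congr rfl fun k hk => congrArg _ (bell_eq k hk)]
  simp only [mul_sum]
  rw [sum_comm, bell, sum_range_succ', stirling2, add_zero]
  exact sum_congr rfl fun j _ => stirling2_succ_succ_eq_sum_choose_mul n j

section BellFunctional

variable (R : Type*) [CommRing R]

noncomputable def bellFunctional : R[X] →ₗ[R] R :=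
  lsum fun n => (bell n : R) • LinearMap.id

variable {R}

lemma bellFunctional_C_mul (c : R) (f : R[X]) :
    bellFunctional R (C c * f) = c * bellFunctional R f := by
  rw [← smul_eq_C_mul, map_smul, smul_eq_mul]

lemma bellFunctional_X_pow (n : ℕ) : bellFunctional R (X ^ n) = bell n := by
  simp [bellFunctional, X_pow_eq_monomial]

lemma bellFunctional_C_mul_X_pow (c : R) (n : ℕ) :
    bellFunctional R (C c * X ^ n) = c * bell n := by
  rw [bellFunctional_C_mul, bellFunctional_X_pow]

lemma bellFunctional_X_add_one_pow (n : ℕ) :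
    bellFunctional R ((X + 1) ^ n) = bell (n + 1) := by
  simp only [add_pow, one_pow, mul_one, map_sum, bell_succ, Nat.cast_sum, Nat.cast_mul]
  refine sum_congr rfl fun k _ => ?_
  rw [mul_comm, ← C_eq_natCast, bellFunctional_C_mul_X_pow]

lemma bellFunctional_X_mul (f : R[X]) :
    bellFunctional R (X * f) = bellFunctional R (f.comp (X + 1)) := by
  induction f using Polynomial.induction_on' with
  | add f g hf hg => rw [mul_add, map_add, hf, hg, add_comp, map_add]
  | monomial n a =>
    rw [← C_mul_X_pow_eq_monomial, mul_left_comm, ← pow_succ', bellFunctional_C_mul_X_pow,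
      mul_comp, C_comp, X_pow_comp, bellFunctional_C_mul, bellFunctional_X_add_one_pow]

lemma bellFunctional_X_sq_mul (f : R[X]) :
    bellFunctional R (X ^ 2 * f) =
      bellFunctional R (f.comp (X + 2)) + bellFunctional R (f.comp (X + 1)) := by
  rw [sq, mul_assoc, bellFunctional_X_mul, mul_comp, X_comp, add_mul, map_add,
    bellFunctional_X_mul, comp_assoc, add_comp, X_comp, one_comp, add_assoc, one_add_one_eq_two,
    one_mul]

lemma bellFunctional_descPochhammer (n : ℕ) : bellFunctional R (descPochhammer R n) = 1 := by
  induction n with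
  | zero =>
    rw [descPochhammer_zero, ← pow_zero X, bellFunctional_X_pow, show bell 0 = 1 from rfl,
      Nat.cast_one]
  | succ n ih =>
    rw [descPochhammer_succ_left, bellFunctional_X_mul, comp_assoc, sub_comp, X_comp, one_comp,
      add_sub_cancel_right, comp_X, ih]

end BellFunctional

section FiniteField

variable {K : Type*} [Field K] [Fintype K]

lemma FiniteField.prod_univ_X_sub_C : ∏ a : K, (X - C a) = X ^ Fintype.card K - X := by
  have monic : (X ^ Fintype.card K - X : K[X]).Monic :=
    monic_X_pow_sub (by rw [degree_X]; exact_mod_cast Fintype.one_lt_card)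
  have card_roots : (X ^ Fintype.card K - X : K[X]).roots.card =
      (X ^ Fintype.card K - X : K[X]).natDegree := by
    rw [FiniteField.roots_X_pow_card_sub_X,
      FiniteField.X_pow_card_sub_X_natDegree_eq K Fintype.one_lt_card, card_val, card_univ]
  have := prod_multiset_X_sub_C_of_monic_of_roots_card_eq monic card_roots
  rwa [FiniteField.roots_X_pow_card_sub_X] at this

variable [DecidableEq K]

noncomputable def vanishingCofactor (b : K) : K[X] := ∏ c ∈ univ.erase b, (X - C c)

lemma X_sub_C_mul_vanishingCofactor (b : K) :
    (X - C b) * vanishingCofactor b = ∏ c : K, (X - C c) :=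
  mul_prod_erase _ (fun c => X - C c) (mem_univ b)

lemma vanishingCofactor_comp_X_add_C (b c : K) :
    (vanishingCofactor b).comp (X + C c) = vanishingCofactor (b - c) := by
  rw [vanishingCofactor, Polynomial.prod_comp]
  refine prod_nbij' (· - c) (· + c) (by simp) (by simp [← eq_sub_iff_add_eq]) (by simp)
    (by simp) fun d _ => ?_
  rw [sub_comp, X_comp, C_comp, C_sub]
  ring

lemma vanishingCofactor_eq_sum {b : K} (hb : b ≠ 0) :
    vanishingCofactor b =
      ∑ k ∈ Icc 1 (Fintype.card K - 1), C (b ^ (Fintype.card K - 1 - k)) * X ^ k := by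
  set n := Fintype.card K - 1
  have hn : n + 1 = Fintype.card K := Nat.sub_add_cancel Fintype.card_pos
  have as_geom_sum : ∑ k ∈ Icc 1 n, C (b ^ (n - k)) * X ^ k =
      X * ∑ i ∈ range n, X ^ i * C b ^ (n - 1 - i) := by
    rw [← Ico_add_one_right_eq_Icc, sum_Ico_eq_sum_range, add_tsub_cancel_right,
      mul_sum]
    refine sum_congr rfl fun i _ => ?_
    rw [show n - (1 + i) = n - 1 - i by omega, C_pow]
    ring
  apply mul_left_cancel₀ (X_sub_C_ne_zero b)
  rw [X_sub_C_mul_vanishingCofactor, FiniteField.prod_univ_X_sub_C, as_geom_sum, mul_left_comm,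
    mul_comm (X - C b), geom_sum₂_mul, ← C_pow, FiniteField.pow_card_sub_one_eq_one b hb, C_1,
    mul_sub, mul_one, ← pow_succ', hn]

end FiniteField

lemma descPochhammer_eq_prod_range (R : Type*) [CommRing R] (n : ℕ) :
    descPochhammer R n = ∏ j ∈ range n, (X - C (j : R)) := by
  induction n with
  | zero => rfl
  | succ n ih => rw [descPochhammer_succ_right, ih, prod_range_succ, map_natCast]

section ZMod

variable {p : ℕ}

lemma descPochhammer_zmod_eq_prod_univ [NeZero p] :
    descPochhammer (ZMod p) p = ∏ a : ZMod p, (X - C a) := by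
  rw [descPochhammer_eq_prod_range]
  exact prod_nbij' (fun j => (j : ZMod p)) ZMod.val (by simp) (by simp [ZMod.val_lt])
    (fun j hj => ZMod.val_cast_of_lt (mem_range.1 hj)) (by simp) (by simp)

variable [Fact p.Prime]

lemma bellFunctional_vanishingCofactor_sub_one (b : ZMod p) :
    bellFunctional (ZMod p) (vanishingCofactor (b - 1)) =
      1 + b * bellFunctional (ZMod p) (vanishingCofactor b) := by
  rw [← vanishingCofactor_comp_X_add_C, C_1, ← bellFunctional_X_mul,
    show X * vanishingCofactor b = (X - C b) * vanishingCofactor b + C b * vanishingCofactor b by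
      ring,
    X_sub_C_mul_vanishingCofactor, ← descPochhammer_zmod_eq_prod_univ, map_add,
    bellFunctional_descPochhammer, bellFunctional_C_mul]

lemma bellFunctional_vanishingCofactor_neg_natCast (n : ℕ) :
    bellFunctional (ZMod p) (vanishingCofactor (-((n + 1 : ℕ) : ZMod p))) =
      (-1) ^ n * numDerangements n := by
  induction n with
  | zero =>
    rw [show -((0 + 1 : ℕ) : ZMod p) = 0 - 1 by simp, bellFunctional_vanishingCofactor_sub_one]
    simp
  | succ n ih =>
    have derangements := congrArg (Int.cast : ℤ → ZMod p) (numDerangements_succ n)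
    push_cast at derangements
    have neg_one_pow_mul_self : (-1 : ZMod p) ^ n * (-1) ^ n = 1 := by
      rw [← mul_pow]; norm_num
    rw [show -((n + 1 + 1 : ℕ) : ZMod p) = -((n + 1 : ℕ) : ZMod p) - 1 by push_cast; ring,
      bellFunctional_vanishingCofactor_sub_one, ih, derangements]
    push_cast
    linear_combination -neg_one_pow_mul_self

end ZMod

theorem sun_zagier_n2_general (m p : ℕ) (hp : p.Prime) (hpm : ¬ p ∣ m) :
    (∑ k ∈ Icc 1 (p - 1), (-(m : ℤ)) ^ (p - 1 - k) * bell (k + 2)) ≡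
      (-1) ^ m * ((numDerangements m : ℤ) - (numDerangements (m + 1) : ℤ)) [ZMOD p] := by
  have : Fact p.Prime := ⟨hp⟩
  have hm : -(m : ZMod p) ≠ 0 := by rwa [neg_ne_zero, Ne, ZMod.natCast_eq_zero_iff]
  have cofactor_eq := vanishingCofactor_eq_sum hm
  rw [ZMod.card] at cofactor_eq
  rw [← ZMod.intCast_eq_intCast_iff]
  push_cast
  calc ∑ k ∈ Icc 1 (p - 1), (-(m : ZMod p)) ^ (p - 1 - k) * (bell (k + 2) : ZMod p)
      = bellFunctional (ZMod p) (X ^ 2 * vanishingCofactor (-(m : ZMod p))) := by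
        rw [cofactor_eq, mul_sum, map_sum]
        refine sum_congr rfl fun k _ => ?_
        rw [mul_left_comm, ← pow_add, add_comm, bellFunctional_C_mul_X_pow]
    _ = bellFunctional (ZMod p) (vanishingCofactor (-((m + 1 + 1 : ℕ) : ZMod p))) +
          bellFunctional (ZMod p) (vanishingCofactor (-((m + 1 : ℕ) : ZMod p))) := by
        rw [bellFunctional_X_sq_mul, ← C_1, ← C_ofNat, vanishingCofactor_comp_X_add_C,
          vanishingCofactor_comp_X_add_C]
        push_cast
        ring_nf
    _ = _ := by
        rw [bellFunctional_vanishingCofactor_neg_natCast,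
          bellFunctional_vanishingCofactor_neg_natCast]
        ring

theorem sun_zagier_n2 (m p : ℕ) (hm : 1 ≤ m) (hp : p.Prime) (hpm : ¬ p ∣ m) :
    (∑ k ∈ Icc 1 (p - 1), (-(m : ℤ)) ^ (p - 1 - k) * bell (k + 2)) ≡
      (-1) ^ m * ((numDerangements m : ℤ) - (numDerangements (m + 1) : ℤ)) [ZMOD p] :=
  sun_zagier_n2_general m p hp hpm
end
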